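/- Let n ≥ 1, let c_1, …, c_n > 0 with Σ_{j=1}^n c_j = N, and let a_1, …, a_n > 0. Suppose λ_0, λ_1 ∈ ℝ satisfy λ_0 + λ_1 = N and λ_0 + λ_1 a_j > 0 for every j, and define p*_j = c_j / (λ_0 + λ_1 a_j). Assume that Σ_{j=1}^n p*_j = 1 and Σ_{j=1}^n p*_j a_j = 1. Then for every vector (p_1, …, p_n) with p_j > 0, Σ_{j=1}^n p_j = 1, and Σ_{j=1}^n p_j a_j = 1, it holds that Σ_{j=1}^n c_j log p_j ≤ Σ_{j=1}^n c_j log p*_j. -/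
import Mathlib


/-- Constrained maximization underlying the M-step update (17): with positive weights
`c_j` summing to `N`, tilting factors `a_j > 0`, and multipliers `λ_0 + λ_1 = N`, the
masses `p*_j = c_j / (λ_0 + λ_1 a_j)`, if feasible (`∑ p*_j = 1`, `∑ p*_j a_j = 1`),
maximize `∑_j c_j log p_j` over all feasible positive `p`. -/
theorem m_step_maximizer (n : ℕ) (hn : 1 ≤ n)
    (c a pstar p : Fin n → ℝ) (N : ℝ)
    (hc : ∀ j, 0 < c j) (hcN : ∑ j, c j = N)
    (ha : ∀ j, 0 < a j)
    (lam0 lam1 : ℝ) (hlam : lam0 + lam1 = N)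
    (hden : ∀ j, 0 < lam0 + lam1 * a j)
    (hpstar : ∀ j, pstar j = c j / (lam0 + lam1 * a j))
    (hpstar1 : ∑ j, pstar j = 1) (hpstar2 : ∑ j, pstar j * a j = 1)
    (hp : ∀ j, 0 < p j) (hp1 : ∑ j, p j = 1) (hp2 : ∑ j, p j * a j = 1) :
    ∑ j, c j * Real.log (p j) ≤ ∑ j, c j * Real.log (pstar j) := by
  have hps : ∀ j, 0 < pstar j := fun j => by
    rw [hpstar j]; exact div_pos (hc j) (hden j)
  have key : ∀ j, c j * Real.log (p j) - c j * Real.log (pstar j)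
      ≤ (lam0 + lam1 * a j) * p j - c j := by
    intro j
    have hlog : Real.log (p j) - Real.log (pstar j) = Real.log (p j / pstar j) := by
      rw [Real.log_div (hp j).ne' (hps j).ne']
    have hle : Real.log (p j / pstar j) ≤ p j / pstar j - 1 :=
      Real.log_le_sub_one_of_pos (div_pos (hp j) (hps j))
    have h1 : c j * Real.log (p j) - c j * Real.log (pstar j)
        ≤ c j * (p j / pstar j - 1) := by
      rw [← mul_sub, hlog]
      exact mul_le_mul_of_nonneg_left hle (hc j).le
    have h2 : c j * (p j / pstar j - 1) = (lam0 + lam1 * a j) * p j - c j := by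
      rw [hpstar j]
      field_simp
      field_simp [(hc j).ne']
    linarith
  calc ∑ j, c j * Real.log (p j)
      ≤ ∑ j, c j * Real.log (pstar j) + ∑ j, ((lam0 + lam1 * a j) * p j - c j) := by
        rw [← Finset.sum_add_distrib]
        apply Finset.sum_le_sum
        intro j _
        linarith [key j]
    _ = ∑ j, c j * Real.log (pstar j) := by
        have : ∑ j, ((lam0 + lam1 * a j) * p j - c j) = 0 := by
          have : ∑ j, ((lam0 + lam1 * a j) * p j - c j)
              = lam0 * ∑ j, p j + lam1 * ∑ j, p j * a j - ∑ j, c j := by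
            rw [Finset.mul_sum, Finset.mul_sum, ← Finset.sum_add_distrib,
              ← Finset.sum_sub_distrib]
            congr 1; ext j; ring
          rw [this, hp1, hp2, hcN]; linarith
        rw [this, add_zero]
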